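/- For every integer n ≥ 0 and every real t, the following polynomial identity holds: P_{n,3}(t)·P_{n,4}(t) = a₁·P_{n,1}(t) + a₂·P_{n,2}(t) + a₃·P_{n,3}(t) + a₄·P_{n,4}(t) + a₅·P_{n,5}(t) + a₆·P_{n,6}(t) + a₇·P_{n,7}(t), where a₁ = (n+2)(n+3)(n+4)/((n+8)(n+9)(n+10)); a₂ = −6(n−1)(n+3)(n+4)(n+6)²/((n+7)(n+8)(n+9)(n+10)(n+11)); a₃ = 3(n+4)(n+5)(7n³+52n²+67n+162)/((n+7)(n+9)(n+10)(n+11)(n+12)); a₄ = −4(n−1)(n+6)(11n³+123n²+436n+648)/((n+8)(n+9)(n+11)(n+12)(n+13)); a₅ = 3(n+5)(n+6)(n+7)(19n³+155n²+162n+504)/((n+8)(n+9)(n+10)(n+11)(n+13)(n+14)); a₆ = −42(n−1)(n+5)(n+6)²(n+7)(n+8)/((n+9)(n+10)(n+11)(n+12)(n+13)(n+15)); a₇ = 14(n+5)(n+6)²(n+7)²(n+8)/((n+10)(n+11)(n+12)(n+13)(n+14)(n+15)). -/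
import Mathlib

set_option maxHeartbeats 16000000


/-- The Pochhammer symbol (rising factorial) `(a)_j = a(a+1)⋯(a+j-1)` for real `a`. -/
noncomputable def poch (a : ℝ) (j : ℕ) : ℝ := (ascPochhammer ℝ j).eval a

/-- The normalized spherical polynomial
`P_{n,w}(t) = ((-1)^w (n+1)_w / (w+1)!) ∑_{j=0}^w (-1)^j C(w,j) ((w+n+2)_j/(n+1)_j) t^j`. -/
noncomputable def P (n w : ℕ) (t : ℝ) : ℝ :=
  ((-1 : ℝ) ^ w * poch ((n : ℝ) + 1) w / (Nat.factorial (w + 1))) *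
    ∑ j ∈ Finset.range (w + 1),
      (-1 : ℝ) ^ j * (Nat.choose w j) *
        (poch ((w : ℝ) + (n : ℝ) + 2) j / poch ((n : ℝ) + 1) j) * t ^ j

lemma PA1 (n : ℕ) (t : ℝ) : P n 1 t =
    ((-1 : ℝ) * ((n : ℝ) + 1) * t ^ 0 +
      (1 : ℝ) * ((n : ℝ) + 3) * t ^ 1) / 2 := by
  have h : ∀ k : ℕ, 0 < k → ((n:ℝ) + k) ≠ 0 := fun k hk => by positivity
  have h1 := h 1 one_pos; have h2 := h 2 two_pos; have h3 := h 3 (by norm_num)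
  have h4 := h 4 (by norm_num); have h5 := h 5 (by norm_num); have h6 := h 6 (by norm_num)
  simp only [P, poch]
  norm_num [Finset.sum_range_succ, ascPochhammer_succ_right, ascPochhammer_zero,
    Nat.factorial, Nat.choose]
  field_simp
  ring

lemma PA2 (n : ℕ) (t : ℝ) : P n 2 t =
    ((1 : ℝ) * ((n : ℝ) + 1) * ((n : ℝ) + 2) * t ^ 0 +
      (-2 : ℝ) * ((n : ℝ) + 2) * ((n : ℝ) + 4) * t ^ 1 +
      (1 : ℝ) * ((n : ℝ) + 4) * ((n : ℝ) + 5) * t ^ 2) / 6 := by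
  have h : ∀ k : ℕ, 0 < k → ((n:ℝ) + k) ≠ 0 := fun k hk => by positivity
  have h1 := h 1 one_pos; have h2 := h 2 two_pos; have h3 := h 3 (by norm_num)
  have h4 := h 4 (by norm_num); have h5 := h 5 (by norm_num); have h6 := h 6 (by norm_num)
  simp only [P, poch]
  norm_num [Finset.sum_range_succ, ascPochhammer_succ_right, ascPochhammer_zero,
    Nat.factorial, Nat.choose]
  field_simp
  ring

lemma PA3 (n : ℕ) (t : ℝ) : P n 3 t =
    ((-1 : ℝ) * ((n : ℝ) + 1) * ((n : ℝ) + 2) * ((n : ℝ) + 3) * t ^ 0 +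
      (3 : ℝ) * ((n : ℝ) + 2) * ((n : ℝ) + 3) * ((n : ℝ) + 5) * t ^ 1 +
      (-3 : ℝ) * ((n : ℝ) + 3) * ((n : ℝ) + 5) * ((n : ℝ) + 6) * t ^ 2 +
      (1 : ℝ) * ((n : ℝ) + 5) * ((n : ℝ) + 6) * ((n : ℝ) + 7) * t ^ 3) / 24 := by
  have h : ∀ k : ℕ, 0 < k → ((n:ℝ) + k) ≠ 0 := fun k hk => by positivity
  have h1 := h 1 one_pos; have h2 := h 2 two_pos; have h3 := h 3 (by norm_num)
  have h4 := h 4 (by norm_num); have h5 := h 5 (by norm_num); have h6 := h 6 (by norm_num)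
  simp only [P, poch]
  norm_num [Finset.sum_range_succ, ascPochhammer_succ_right, ascPochhammer_zero,
    Nat.factorial, Nat.choose]
  field_simp
  ring

lemma PA4 (n : ℕ) (t : ℝ) : P n 4 t =
    ((1 : ℝ) * ((n : ℝ) + 1) * ((n : ℝ) + 2) * ((n : ℝ) + 3) * ((n : ℝ) + 4) * t ^ 0 +
      (-4 : ℝ) * ((n : ℝ) + 2) * ((n : ℝ) + 3) * ((n : ℝ) + 4) * ((n : ℝ) + 6) * t ^ 1 +
      (6 : ℝ) * ((n : ℝ) + 3) * ((n : ℝ) + 4) * ((n : ℝ) + 6) * ((n : ℝ) + 7) * t ^ 2 +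
      (-4 : ℝ) * ((n : ℝ) + 4) * ((n : ℝ) + 6) * ((n : ℝ) + 7) * ((n : ℝ) + 8) * t ^ 3 +
      (1 : ℝ) * ((n : ℝ) + 6) * ((n : ℝ) + 7) * ((n : ℝ) + 8) * ((n : ℝ) + 9) * t ^ 4) / 120 := by
  have h : ∀ k : ℕ, 0 < k → ((n:ℝ) + k) ≠ 0 := fun k hk => by positivity
  have h1 := h 1 one_pos; have h2 := h 2 two_pos; have h3 := h 3 (by norm_num)
  have h4 := h 4 (by norm_num); have h5 := h 5 (by norm_num); have h6 := h 6 (by norm_num)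
  simp only [P, poch]
  norm_num [Finset.sum_range_succ, ascPochhammer_succ_right, ascPochhammer_zero,
    Nat.factorial, Nat.choose]
  field_simp
  ring

lemma PA5 (n : ℕ) (t : ℝ) : P n 5 t =
    ((-1 : ℝ) * ((n : ℝ) + 1) * ((n : ℝ) + 2) * ((n : ℝ) + 3) * ((n : ℝ) + 4) * ((n : ℝ) + 5) * t ^ 0 +
      (5 : ℝ) * ((n : ℝ) + 2) * ((n : ℝ) + 3) * ((n : ℝ) + 4) * ((n : ℝ) + 5) * ((n : ℝ) + 7) * t ^ 1 +
      (-10 : ℝ) * ((n : ℝ) + 3) * ((n : ℝ) + 4) * ((n : ℝ) + 5) * ((n : ℝ) + 7) * ((n : ℝ) + 8) * t ^ 2 +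
      (10 : ℝ) * ((n : ℝ) + 4) * ((n : ℝ) + 5) * ((n : ℝ) + 7) * ((n : ℝ) + 8) * ((n : ℝ) + 9) * t ^ 3 +
      (-5 : ℝ) * ((n : ℝ) + 5) * ((n : ℝ) + 7) * ((n : ℝ) + 8) * ((n : ℝ) + 9) * ((n : ℝ) + 10) * t ^ 4 +
      (1 : ℝ) * ((n : ℝ) + 7) * ((n : ℝ) + 8) * ((n : ℝ) + 9) * ((n : ℝ) + 10) * ((n : ℝ) + 11) * t ^ 5) / 720 := by
  have h : ∀ k : ℕ, 0 < k → ((n:ℝ) + k) ≠ 0 := fun k hk => by positivity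
  have h1 := h 1 one_pos; have h2 := h 2 two_pos; have h3 := h 3 (by norm_num)
  have h4 := h 4 (by norm_num); have h5 := h 5 (by norm_num); have h6 := h 6 (by norm_num)
  simp only [P, poch]
  norm_num [Finset.sum_range_succ, ascPochhammer_succ_right, ascPochhammer_zero,
    Nat.factorial, Nat.choose]
  field_simp
  ring

lemma PA6 (n : ℕ) (t : ℝ) : P n 6 t =
    ((1 : ℝ) * ((n : ℝ) + 1) * ((n : ℝ) + 2) * ((n : ℝ) + 3) * ((n : ℝ) + 4) * ((n : ℝ) + 5) * ((n : ℝ) + 6) * t ^ 0 +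
      (-6 : ℝ) * ((n : ℝ) + 2) * ((n : ℝ) + 3) * ((n : ℝ) + 4) * ((n : ℝ) + 5) * ((n : ℝ) + 6) * ((n : ℝ) + 8) * t ^ 1 +
      (15 : ℝ) * ((n : ℝ) + 3) * ((n : ℝ) + 4) * ((n : ℝ) + 5) * ((n : ℝ) + 6) * ((n : ℝ) + 8) * ((n : ℝ) + 9) * t ^ 2 +
      (-20 : ℝ) * ((n : ℝ) + 4) * ((n : ℝ) + 5) * ((n : ℝ) + 6) * ((n : ℝ) + 8) * ((n : ℝ) + 9) * ((n : ℝ) + 10) * t ^ 3 +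
      (15 : ℝ) * ((n : ℝ) + 5) * ((n : ℝ) + 6) * ((n : ℝ) + 8) * ((n : ℝ) + 9) * ((n : ℝ) + 10) * ((n : ℝ) + 11) * t ^ 4 +
      (-6 : ℝ) * ((n : ℝ) + 6) * ((n : ℝ) + 8) * ((n : ℝ) + 9) * ((n : ℝ) + 10) * ((n : ℝ) + 11) * ((n : ℝ) + 12) * t ^ 5 +
      (1 : ℝ) * ((n : ℝ) + 8) * ((n : ℝ) + 9) * ((n : ℝ) + 10) * ((n : ℝ) + 11) * ((n : ℝ) + 12) * ((n : ℝ) + 13) * t ^ 6) / 5040 := by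
  have h : ∀ k : ℕ, 0 < k → ((n:ℝ) + k) ≠ 0 := fun k hk => by positivity
  have h1 := h 1 one_pos; have h2 := h 2 two_pos; have h3 := h 3 (by norm_num)
  have h4 := h 4 (by norm_num); have h5 := h 5 (by norm_num); have h6 := h 6 (by norm_num)
  simp only [P, poch]
  norm_num [Finset.sum_range_succ, ascPochhammer_succ_right, ascPochhammer_zero,
    Nat.factorial, Nat.choose]
  field_simp
  ring

lemma PA7 (n : ℕ) (t : ℝ) : P n 7 t =
    ((-1 : ℝ) * ((n : ℝ) + 1) * ((n : ℝ) + 2) * ((n : ℝ) + 3) * ((n : ℝ) + 4) * ((n : ℝ) + 5) * ((n : ℝ) + 6) * ((n : ℝ) + 7) * t ^ 0 +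
      (7 : ℝ) * ((n : ℝ) + 2) * ((n : ℝ) + 3) * ((n : ℝ) + 4) * ((n : ℝ) + 5) * ((n : ℝ) + 6) * ((n : ℝ) + 7) * ((n : ℝ) + 9) * t ^ 1 +
      (-21 : ℝ) * ((n : ℝ) + 3) * ((n : ℝ) + 4) * ((n : ℝ) + 5) * ((n : ℝ) + 6) * ((n : ℝ) + 7) * ((n : ℝ) + 9) * ((n : ℝ) + 10) * t ^ 2 +
      (35 : ℝ) * ((n : ℝ) + 4) * ((n : ℝ) + 5) * ((n : ℝ) + 6) * ((n : ℝ) + 7) * ((n : ℝ) + 9) * ((n : ℝ) + 10) * ((n : ℝ) + 11) * t ^ 3 +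
      (-35 : ℝ) * ((n : ℝ) + 5) * ((n : ℝ) + 6) * ((n : ℝ) + 7) * ((n : ℝ) + 9) * ((n : ℝ) + 10) * ((n : ℝ) + 11) * ((n : ℝ) + 12) * t ^ 4 +
      (21 : ℝ) * ((n : ℝ) + 6) * ((n : ℝ) + 7) * ((n : ℝ) + 9) * ((n : ℝ) + 10) * ((n : ℝ) + 11) * ((n : ℝ) + 12) * ((n : ℝ) + 13) * t ^ 5 +
      (-7 : ℝ) * ((n : ℝ) + 7) * ((n : ℝ) + 9) * ((n : ℝ) + 10) * ((n : ℝ) + 11) * ((n : ℝ) + 12) * ((n : ℝ) + 13) * ((n : ℝ) + 14) * t ^ 6 +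
      (1 : ℝ) * ((n : ℝ) + 9) * ((n : ℝ) + 10) * ((n : ℝ) + 11) * ((n : ℝ) + 12) * ((n : ℝ) + 13) * ((n : ℝ) + 14) * ((n : ℝ) + 15) * t ^ 7) / 40320 := by
  have h : ∀ k : ℕ, 0 < k → ((n:ℝ) + k) ≠ 0 := fun k hk => by positivity
  have h1 := h 1 one_pos; have h2 := h 2 two_pos; have h3 := h 3 (by norm_num)
  have h4 := h 4 (by norm_num); have h5 := h 5 (by norm_num); have h6 := h 6 (by norm_num)
  simp only [P, poch]
  norm_num [Finset.sum_range_succ, ascPochhammer_succ_right, ascPochhammer_zero,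
    Nat.factorial, Nat.choose]
  field_simp
  ring


/-- The explicit linearization of the product `P_{n,3}·P_{n,4}` displayed in the paper. -/
theorem linearization_P3_P4 (n : ℕ) (t : ℝ) :
    P n 3 t * P n 4 t =
      (((n : ℝ) + 2) * ((n : ℝ) + 3) * ((n : ℝ) + 4) /
          (((n : ℝ) + 8) * ((n : ℝ) + 9) * ((n : ℝ) + 10))) * P n 1 t +
      (-(6 * ((n : ℝ) - 1) * ((n : ℝ) + 3) * ((n : ℝ) + 4) * ((n : ℝ) + 6) ^ 2) /
          (((n : ℝ) + 7) * ((n : ℝ) + 8) * ((n : ℝ) + 9) * ((n : ℝ) + 10) * ((n : ℝ) + 11))) *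
        P n 2 t +
      ((3 * ((n : ℝ) + 4) * ((n : ℝ) + 5) *
            (7 * (n : ℝ) ^ 3 + 52 * (n : ℝ) ^ 2 + 67 * (n : ℝ) + 162)) /
          (((n : ℝ) + 7) * ((n : ℝ) + 9) * ((n : ℝ) + 10) * ((n : ℝ) + 11) * ((n : ℝ) + 12))) *
        P n 3 t +
      (-(4 * ((n : ℝ) - 1) * ((n : ℝ) + 6) *
            (11 * (n : ℝ) ^ 3 + 123 * (n : ℝ) ^ 2 + 436 * (n : ℝ) + 648)) /
          (((n : ℝ) + 8) * ((n : ℝ) + 9) * ((n : ℝ) + 11) * ((n : ℝ) + 12) * ((n : ℝ) + 13))) *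
        P n 4 t +
      ((3 * ((n : ℝ) + 5) * ((n : ℝ) + 6) * ((n : ℝ) + 7) *
            (19 * (n : ℝ) ^ 3 + 155 * (n : ℝ) ^ 2 + 162 * (n : ℝ) + 504)) /
          (((n : ℝ) + 8) * ((n : ℝ) + 9) * ((n : ℝ) + 10) * ((n : ℝ) + 11) * ((n : ℝ) + 13) *
            ((n : ℝ) + 14))) * P n 5 t +
      (-(42 * ((n : ℝ) - 1) * ((n : ℝ) + 5) * ((n : ℝ) + 6) ^ 2 * ((n : ℝ) + 7) * ((n : ℝ) + 8)) /
          (((n : ℝ) + 9) * ((n : ℝ) + 10) * ((n : ℝ) + 11) * ((n : ℝ) + 12) * ((n : ℝ) + 13) *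
            ((n : ℝ) + 15))) * P n 6 t +
      ((14 * ((n : ℝ) + 5) * ((n : ℝ) + 6) ^ 2 * ((n : ℝ) + 7) ^ 2 * ((n : ℝ) + 8)) /
          (((n : ℝ) + 10) * ((n : ℝ) + 11) * ((n : ℝ) + 12) * ((n : ℝ) + 13) * ((n : ℝ) + 14) *
            ((n : ℝ) + 15))) * P n 7 t := by
  have h : ∀ k : ℕ, 0 < k → ((n:ℝ) + k) ≠ 0 := fun k hk => by positivity
  have h7 := h 7 (by norm_num); have h8 := h 8 (by norm_num); have h9 := h 9 (by norm_num)
  have h10 := h 10 (by norm_num); have h11 := h 11 (by norm_num)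
  have h12 := h 12 (by norm_num); have h13 := h 13 (by norm_num)
  have h14 := h 14 (by norm_num); have h15 := h 15 (by norm_num)
  push_cast at h7 h8 h9 h10 h11 h12 h13 h14 h15
  rw [PA1, PA2, PA3, PA4, PA5, PA6, PA7]
  field_simp
  ring
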